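/- arXiv:2404.05899 — 2 statements merged into one kernel-verified Lean document; each statement's English description precedes it below -/
import Mathlib

section
/- In a Tait-style infinitary sequent calculus with axiom rule (Γ, A, ¬A is derivable for atomic A), the ω-rule/universal rule (from derivations of Γ, A(a) for all terms a infer Γ, ∀x A(x)), finite conjunction and disjunction rules, and a weakening-closed derivability notion, cut is admissible for the propositional and quantifier fragment: if Γ, A and Δ, ¬A are both derivable then Γ, Δ is derivable, proved by induction on the logical complexity of A with side induction on derivation lengths. -/
universe u

/-- Formulas in negation normal form over atoms `atom` and terms `term`. -/
inductive Fml (atom term : Type u) : Type u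
  | pos : atom → Fml atom term
  | neg : atom → Fml atom term
  | and : Fml atom term → Fml atom term → Fml atom term
  | or : Fml atom term → Fml atom term → Fml atom term
  | all : (term → Fml atom term) → Fml atom term
  | ex : (term → Fml atom term) → Fml atom term

/-- Complementation `A ↦ ¬A` on negation normal forms (De Morgan dual);
it satisfies `¬¬A = A`. -/
def Fml.compl {atom term : Type u} : Fml atom term → Fml atom term
  | .pos a => .neg a
  | .neg a => .pos a
  | .and A B => .or A.compl B.compl
  | .or A B => .and A.compl B.compl
  | .all f => .ex fun t => (f t).compl
  | .ex f => .all fun t => (f t).compl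

/-- Tait-style infinitary sequent calculus: axiom rule, conjunction and
disjunction rules, the ω-rule for `∀`, a rule for `∃`, and weakening. -/
inductive Der {atom term : Type u} : Set (Fml atom term) → Prop
  | ax (Γ : Set (Fml atom term)) (a : atom) :
      Der (Γ ∪ {Fml.pos a, Fml.neg a})
  | andI {Γ : Set (Fml atom term)} {A B : Fml atom term} :
      Der (Γ ∪ {A}) → Der (Γ ∪ {B}) → Der (Γ ∪ {Fml.and A B})
  | orIL {Γ : Set (Fml atom term)} {A B : Fml atom term} :
      Der (Γ ∪ {A}) → Der (Γ ∪ {Fml.or A B})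
  | orIR {Γ : Set (Fml atom term)} {A B : Fml atom term} :
      Der (Γ ∪ {B}) → Der (Γ ∪ {Fml.or A B})
  | allI {Γ : Set (Fml atom term)} {f : term → Fml atom term} :
      (∀ a : term, Der (Γ ∪ {f a})) → Der (Γ ∪ {Fml.all f})
  | exI {Γ : Set (Fml atom term)} {f : term → Fml atom term} (a : term) :
      Der (Γ ∪ {f a}) → Der (Γ ∪ {Fml.ex f})
  | weak {Γ : Set (Fml atom term)} (Δ : Set (Fml atom term)) :
      Der Γ → Der (Γ ∪ Δ)

/-! Since sequents are sets, an occurrence of a formula `X` in a derivation of `Γ, X` can be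
replaced by `Δ` rule by rule, provided this is possible wherever `X` is the principal formula of
a rule. With `Δ = {A}` this gives the inversion of `A ∧ B` and `∀x A`. For an atom, a disjunction
or an existential, the principal case is an axiom or a cut on an immediate subformula against the
inverted dual; the dual formulas follow by symmetry, so cut is admissible by induction on the cut
formula. -/

section CutAdmissibility

variable {atom term : Type u}

theorem Der.mono {Γ Δ : Set (Fml atom term)} (h : Der Γ) (hΓΔ : Γ ⊆ Δ) : Der Δ := by
  simpa [Set.union_eq_self_of_subset_left hΓΔ] using Der.weak Δ h

theorem Fml.compl_compl (A : Fml atom term) : A.compl.compl = A := by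
  induction A with
  | pos | neg => rfl
  | and _ _ ihA ihB | or _ _ ihA ihB => simp only [Fml.compl, ihA, ihB]
  | all _ ih | ex _ ih => simp only [Fml.compl, ih]

/-- The premises of the rule with principal formula `X` and side formulas `Γ`; for an atom,
the side condition of the axiom rule. -/
def RulePremises (Γ : Set (Fml atom term)) : Fml atom term → Prop
  | .pos a => Fml.neg a ∈ Γ
  | .neg a => Fml.pos a ∈ Γ
  | .and A B => Der (Γ ∪ {A}) ∧ Der (Γ ∪ {B})
  | .or A B => Der (Γ ∪ {A}) ∨ Der (Γ ∪ {B})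
  | .all f => ∀ t, Der (Γ ∪ {f t})
  | .ex f => ∃ t, Der (Γ ∪ {f t})

theorem Der.of_rulePremises {Γ : Set (Fml atom term)} :
    ∀ {X : Fml atom term}, RulePremises Γ X → Der (Γ ∪ {X})
  | .pos a, (h : Fml.neg a ∈ Γ) => (Der.ax Γ a).mono (by simp [h])
  | .neg a, (h : Fml.pos a ∈ Γ) => (Der.ax Γ a).mono (by simp [h])
  | .and _ _, h => Der.andI h.1 h.2
  | .or _ _, .inl h => Der.orIL h
  | .or _ _, .inr h => Der.orIR h
  | .all _, h => Der.allI h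
  | .ex _, ⟨t, h⟩ => Der.exI t h

theorem Der.replace {X : Fml atom term} {Γ Δ : Set (Fml atom term)}
    (h : Der (Γ ∪ {X})) (hX : ∀ Γ', RulePremises (Γ' ∪ Δ) X → Der (Γ' ∪ Δ)) :
    Der (Γ ∪ Δ) := by
  -- Generalizing to `S ⊆ Γ ∪ {X}` lets the induction pass through weakenings.
  suffices ∀ {S}, Der S → ∀ Γ, S ⊆ Γ ∪ {X} → Der (Γ ∪ Δ) from this h Γ subset_rfl
  have conclude : ∀ {Γ P}, P ∈ Γ ∪ {X} → RulePremises (Γ ∪ Δ) P → Der (Γ ∪ Δ) := by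
    intro Γ P hP hprem
    rcases hP with hP | rfl
    · exact (Der.of_rulePremises hprem).mono (by simp [hP])
    · exact hX Γ hprem
  have premise : ∀ {Γ₀ Γ A}, (∀ Γ', Γ₀ ∪ {A} ⊆ Γ' ∪ {X} → Der (Γ' ∪ Δ)) →
      Γ₀ ⊆ Γ ∪ {X} → Der ((Γ ∪ Δ) ∪ {A}) := by
    intro Γ₀ Γ A ih hΓ₀
    rw [Set.union_right_comm]
    refine ih (Γ ∪ {A}) ((Set.union_subset_union_left {A} hΓ₀).trans ?_)
    rw [Set.union_right_comm]
  intro S h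
  induction h with
  | ax _ a =>
    intro Γ hS
    have hpos : Fml.pos a ∈ Γ ∪ {X} := hS (by simp)
    have hneg : Fml.neg a ∈ Γ ∪ {X} := hS (by simp)
    rcases hpos with hpos | rfl
    · exact conclude hneg (Or.inl hpos : Fml.pos a ∈ Γ ∪ Δ)
    · refine conclude (Or.inr rfl) (Or.inl ?_ : Fml.neg a ∈ Γ ∪ Δ)
      simpa using hneg
  | andI _ _ ih₁ ih₂ =>
    intro Γ hS
    have hΓ₀ := Set.subset_union_left.trans hS
    exact conclude (hS (Set.mem_union_right _ rfl)) ⟨premise ih₁ hΓ₀, premise ih₂ hΓ₀⟩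
  | orIL _ ih =>
    intro Γ hS
    have hΓ₀ := Set.subset_union_left.trans hS
    exact conclude (hS (Set.mem_union_right _ rfl)) (.inl (premise ih hΓ₀))
  | orIR _ ih =>
    intro Γ hS
    have hΓ₀ := Set.subset_union_left.trans hS
    exact conclude (hS (Set.mem_union_right _ rfl)) (.inr (premise ih hΓ₀))
  | allI _ ih =>
    intro Γ hS
    have hΓ₀ := Set.subset_union_left.trans hS
    exact conclude (hS (Set.mem_union_right _ rfl)) fun t => premise (ih t) hΓ₀
  | exI t _ ih =>
    intro Γ hS
    have hΓ₀ := Set.subset_union_left.trans hS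
    exact conclude (hS (Set.mem_union_right _ rfl)) ⟨t, premise ih hΓ₀⟩
  | weak _ _ ih => exact fun Γ hS => ih Γ (Set.subset_union_left.trans hS)

theorem Der.of_and_left {Γ : Set (Fml atom term)} {A B : Fml atom term}
    (h : Der (Γ ∪ {A.and B})) : Der (Γ ∪ {A}) :=
  h.replace fun _ hAB => by simpa [Set.union_assoc] using hAB.1

theorem Der.of_and_right {Γ : Set (Fml atom term)} {A B : Fml atom term}
    (h : Der (Γ ∪ {A.and B})) : Der (Γ ∪ {B}) :=
  h.replace fun _ hAB => by simpa [Set.union_assoc] using hAB.2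

theorem Der.of_all {Γ : Set (Fml atom term)} {f : term → Fml atom term}
    (h : Der (Γ ∪ {Fml.all f})) (t : term) : Der (Γ ∪ {f t}) :=
  h.replace fun _ hf => by simpa [Set.union_assoc] using hf t

def CutAdmissible (A : Fml atom term) : Prop :=
  ∀ ⦃Γ Δ : Set (Fml atom term)⦄, Der (Γ ∪ {A}) → Der (Δ ∪ {A.compl}) → Der (Γ ∪ Δ)

theorem CutAdmissible.compl {A : Fml atom term} (hA : CutAdmissible A) :
    CutAdmissible A.compl := by
  intro Γ Δ h₁ h₂
  rw [Fml.compl_compl] at h₂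
  rw [Set.union_comm]
  exact hA h₂ h₁

theorem cutAdmissible_compl_iff {A : Fml atom term} :
    CutAdmissible A.compl ↔ CutAdmissible A :=
  ⟨fun h => A.compl_compl ▸ h.compl, CutAdmissible.compl⟩

theorem cutAdmissible_pos (a : atom) : CutAdmissible (term := term) (.pos a) :=
  fun _ _ h₁ h₂ => h₁.replace fun _ (hneg : Fml.neg a ∈ _) =>
    h₂.mono (Set.union_subset Set.subset_union_right (Set.singleton_subset_iff.2 hneg))

theorem CutAdmissible.or {A B : Fml atom term} (hA : CutAdmissible A) (hB : CutAdmissible B) :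
    CutAdmissible (A.or B) := by
  intro Γ Δ h₁ (h₂ : Der (Δ ∪ {A.compl.and B.compl}))
  refine h₁.replace fun _ hAB => ?_
  rw [← Set.union_self Δ, ← Set.union_assoc]
  rcases hAB with hA' | hB'
  · exact hA hA' h₂.of_and_left
  · exact hB hB' h₂.of_and_right

theorem CutAdmissible.ex {f : term → Fml atom term} (hf : ∀ t, CutAdmissible (f t)) :
    CutAdmissible (Fml.ex f) := by
  intro Γ Δ h₁ (h₂ : Der (Δ ∪ {Fml.all fun t => (f t).compl}))
  refine h₁.replace fun _ ⟨t, ht⟩ => ?_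
  rw [← Set.union_self Δ, ← Set.union_assoc]
  exact hf t ht (h₂.of_all t)

theorem cutAdmissible (A : Fml atom term) : CutAdmissible A := by
  induction A with
  | pos a => exact cutAdmissible_pos a
  | neg a => exact (cutAdmissible_pos a).compl
  | or _ _ ihA ihB => exact ihA.or ihB
  | and _ _ ihA ihB =>
    exact (cutAdmissible_compl_iff (A := .and _ _)).1 (ihA.compl.or ihB.compl)
  | ex _ ih => exact CutAdmissible.ex ih
  | all _ ih =>
    exact (cutAdmissible_compl_iff (A := .all _)).1 (CutAdmissible.ex fun t => (ih t).compl)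

end CutAdmissibility

/-- Cut is admissible: if `Γ, A` and `Δ, ¬A` are derivable, so is `Γ, Δ`. -/
theorem cut_admissible {atom term : Type u}
    {Γ Δ : Set (Fml atom term)} {A : Fml atom term}
    (h₁ : Der (Γ ∪ {A})) (h₂ : Der (Δ ∪ {A.compl})) :
    Der (Γ ∪ Δ) :=
  cutAdmissible A h₁ h₂
end

section
/- In the Aczel–Feferman truth theory PT, propositionhood of a universal statement satisfies: P(∀̇f) holds if and only if for all x, P(f x). -/
universe u v

theorem or_iff_forall_or_of_iff_forall {D : Sort*} {A N : Prop} {t n : D → Prop}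
    (hA : A ↔ ∀ x, t x) (hN : N ↔ (∀ x, t x ∨ n x) ∧ ∃ x, n x) :
    A ∨ N ↔ ∀ x, t x ∨ n x := by
  rw [hA, hN]
  constructor
  · rintro (ht | ⟨hdecided, -⟩) x
    · exact .inl (ht x)
    · exact hdecided x
  · intro hdecided
    by_cases ht : ∀ x, t x
    · exact .inl ht
    · obtain ⟨x, hx⟩ := not_forall.mp ht
      exact .inr ⟨hdecided, x, (hdecided x).resolve_left hx⟩

theorem pt_prop_forall_general {S : Type u} {D : Type v} (neg : S → S)
    (dall : (D → S) → S) (T : S → Prop)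
    (hall : ∀ f : D → S, T (dall f) ↔ ∀ x : D, T (f x))
    (hnall : ∀ f : D → S, T (neg (dall f)) ↔
      (∀ x : D, T (f x) ∨ T (neg (f x))) ∧ ∃ x : D, T (neg (f x)))
    (P : S → Prop) (hP : ∀ z : S, P z ↔ T z ∨ T (neg z)) :
    ∀ f : D → S, P (dall f) ↔ ∀ x : D, P (f x) := by
  intro f
  simp only [hP]
  exact or_iff_forall_or_of_iff_forall (hall f) (hnall f)

/-- In (an abstract model of) PT, propositionhood of a universal statement:
`P(∀̇ f) ↔ ∀ x, P (f x)`, where `P z := T z ∨ T ¬̇z`. -/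
theorem pt_prop_forall {S : Type u} {D : Type v} (neg : S → S)
    (dall : (D → S) → S) (T : S → Prop)
    (hall : ∀ f : D → S, T (dall f) ↔ ∀ x : D, T (f x))
    (hnall : ∀ f : D → S, T (neg (dall f)) ↔
      (∀ x : D, T (f x) ∨ T (neg (f x))) ∧ ∃ x : D, T (neg (f x)))
    (hcons : ∀ x : S, ¬ (T x ∧ T (neg x)))
    (P : S → Prop) (hP : ∀ z : S, P z ↔ T z ∨ T (neg z)) :
    ∀ f : D → S, P (dall f) ↔ ∀ x : D, P (f x) :=
  pt_prop_forall_general neg dall T hall hnall P hP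
end
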